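/- The Butcher table of Table 1 satisfies the following ten of the twenty order-6 conditions: Σ_i b_i c_i⁵ = 1/6; Σ_{i,j} b_i c_i³ a(i,j) c_j = 1/12; Σ_i b_i c_i (Σ_j a(i,j) c_j)² = 1/24; Σ_{i,j} b_i c_i² a(i,j) c_j² = 1/18; Σ_i b_i (Σ_j a(i,j) c_j)(Σ_j a(i,j) c_j²) = 1/36; Σ_{i,j,k} b_i c_i² a(i,j) a(j,k) c_k = 1/36; Σ_i b_i (Σ_j a(i,j) c_j)(Σ_{j,k} a(i,j) a(j,k) c_k) = 1/72; Σ_{i,j} b_i c_i a(i,j) c_j³ = 1/24; Σ_{i,j,k} b_i c_i a(i,j) c_j a(j,k) c_k = 1/48; and Σ_{i,j,k} b_i c_i a(i,j) a(j,k) c_k² = 1/72. -/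

import Mathlib

open Finset

/-- Coefficient matrix `a` of the paper's eight-stage sixth-order scheme (Table 1). -/
def a : Matrix (Fin 8) (Fin 8) ℚ :=
  !![0,      0,      0,      0,     0,      0,      0,     0;
     1/6,    0,      0,      0,     0,      0,      0,     0;
     1/12,   1/12,   0,      0,     0,      0,      0,     0;
     0,      -4/33,  5/11,   0,     0,      0,      0,     0;
     -1/4,   -29/44, 31/22,  0,     0,      0,      0,     0;
     3/11,   8/33,   -4/11,  1/11,  14/33,  0,      0,     0;
     -17/48, -5/12,  1,      1,     -13/12, 11/16,  0,     0;
     20/39,  12/39,  -31/39, -1/39, 34/39,  -11/39, 16/39, 0]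

/-- Weights `b` of Table 1. -/
def b : Fin 8 → ℚ := ![13/200, 0, 4/25, 11/40, 0, 11/40, 4/25, 13/200]

/-- Abscissae `c i = Σ_j a i j` of Table 1. -/
def c : Fin 8 → ℚ := fun i => ∑ j, a i j

/-! Pulling the factors that do not depend on an inner summation index out of that sum turns
every condition into a weighted sum of the abscissae and the stage sums `Σ_j a i j c_j ^ m`,
`m ≤ 3`; with these tabulated, what remains is rational arithmetic. -/

lemma c_eq : c = ![0, 1/6, 1/6, 1/3, 1/2, 2/3, 5/6, 1] := by
  ext i
  fin_cases i <;> simp [c, a, Fin.sum_univ_eight] <;> norm_num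

lemma sum_a_mul_c (i : Fin 8) :
    ∑ j, a i j * c j = ![0, 0, 1/72, 1/18, 1/8, 2/9, 25/72, 1/2] i := by
  fin_cases i <;> simp [c_eq, a, Fin.sum_univ_eight] <;> norm_num

lemma sum_a_mul_c_sq (i : Fin 8) :
    ∑ j, a i j * c j ^ 2 = ![0, 0, 1/432, 1/108, 1/48, 67/594, 35/216, 13/36] i := by
  fin_cases i <;> simp [c_eq, a, Fin.sum_univ_eight] <;> norm_num

lemma sum_a_mul_c_cube (i : Fin 8) :
    ∑ j, a i j * c j ^ 3 = ![0, 0, 1/2592, 1/648, 1/288, 199/3564, 35/324, 27/104] i := by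
  fin_cases i <;> simp [c_eq, a, Fin.sum_univ_eight] <;> norm_num

/-- Table 1 satisfies the first ten of the twenty order-6 conditions. -/
theorem order_conditions_6_first_ten :
    (∑ i, b i * c i ^ 5) = 1/6 ∧
    (∑ i, ∑ j, b i * c i ^ 3 * a i j * c j) = 1/12 ∧
    (∑ i, b i * c i * (∑ j, a i j * c j) ^ 2) = 1/24 ∧
    (∑ i, ∑ j, b i * c i ^ 2 * a i j * c j ^ 2) = 1/18 ∧
    (∑ i, b i * (∑ j, a i j * c j) * (∑ j, a i j * c j ^ 2)) = 1/36 ∧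
    (∑ i, ∑ j, ∑ k, b i * c i ^ 2 * a i j * a j k * c k) = 1/36 ∧
    (∑ i, b i * (∑ j, a i j * c j) * (∑ j, ∑ k, a i j * a j k * c k)) = 1/72 ∧
    (∑ i, ∑ j, b i * c i * a i j * c j ^ 3) = 1/24 ∧
    (∑ i, ∑ j, ∑ k, b i * c i * a i j * c j * a j k * c k) = 1/48 ∧
    (∑ i, ∑ j, ∑ k, b i * c i * a i j * a j k * c k ^ 2) = 1/72 := by
  simp only [mul_assoc, ← mul_sum, sum_a_mul_c, sum_a_mul_c_sq, sum_a_mul_c_cube]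
  simp [Fin.sum_univ_eight, c_eq, a, b]
  norm_num
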